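/- arXiv:1906.06234 — 2 statements merged into one kernel-verified Lean document; each statement's English description precedes it below -/
import Mathlib

section
/- Let ε₀ satisfy π/τ ≤ ε₀ < π and let ε be uniformly distributed on [-ε₀, ε₀]. Then for all a, b with 0 < a ≤ b ≤ Gm, the probability that a ≤ G(ε) ≤ b equals the integral over g from a to b of 1/(τ·ε₀·√g·√(Gm − g)) with respect to Lebesgue measure. -/
/-!
On the main lobe `|θ| ≤ π / τ` the gain is `Gm * cos (τ * |θ| / 2) ^ 2`, decreasing in `|θ|`, and
it vanishes outside. Writing `φ g = arccos √(g / Gm)` for the phase at which the gain equals `g`,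
the event `a ≤ G(ε) ≤ b` with `a > 0` is therefore `2 φ b / τ ≤ |ε| ≤ 2 φ a / τ`, which lies inside
`[-ε₀, ε₀]` and has length `4 (φ a - φ b) / τ`. On the other hand `-2 φ` is an antiderivative of
`g ↦ 1 / (√g * √(Gm - g))`, so the integral equals `2 (φ a - φ b) / (τ * ε₀)` as well.
-/

open Real MeasureTheory

/-- The cosine antenna gain with maximum gain `Gm` and beam-spread parameter `τ`. -/
noncomputable def gain (Gm τ θ : ℝ) : ℝ :=
  if |θ| ≤ Real.pi / τ then Gm * Real.cos (τ * θ / 2) ^ 2 else 0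

namespace Real

theorem le_arccos_iff_le_cos {x φ : ℝ} (hx : x ∈ Set.Icc (-1) 1) (hφ : φ ∈ Set.Icc 0 π) :
    φ ≤ arccos x ↔ x ≤ cos φ := by
  conv_rhs => rw [← cos_arccos hx.1 hx.2]
  exact (strictAntiOn_cos.le_iff_ge ⟨arccos_nonneg x, arccos_le_pi x⟩ hφ).symm

theorem arccos_le_iff_cos_le {x φ : ℝ} (hx : x ∈ Set.Icc (-1) 1) (hφ : φ ∈ Set.Icc 0 π) :
    arccos x ≤ φ ↔ cos φ ≤ x := by
  conv_rhs => rw [← cos_arccos hx.1 hx.2]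
  exact (strictAntiOn_cos.le_iff_ge hφ ⟨arccos_nonneg x, arccos_le_pi x⟩).symm

end Real

noncomputable def gainAngle (Gm g : ℝ) : ℝ :=
  arccos √(g / Gm)

theorem gainAngle_nonneg (Gm g : ℝ) : 0 ≤ gainAngle Gm g :=
  arccos_nonneg _

theorem gainAngle_le_pi_div_two (Gm g : ℝ) : gainAngle Gm g ≤ π / 2 :=
  arccos_le_pi_div_two.2 (sqrt_nonneg _)

theorem gainAngle_antitone (Gm : ℝ) (hGm : 0 ≤ Gm) : Antitone (gainAngle Gm) := fun _ _ h ↦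
  antitone_arccos (sqrt_le_sqrt (div_le_div_of_nonneg_right h hGm))

theorem continuous_gainAngle (Gm : ℝ) : Continuous (gainAngle Gm) :=
  continuous_arccos.comp (continuous_sqrt.comp (continuous_id.div_const Gm))

theorem sqrt_div_mem_Icc {Gm g : ℝ} (hGm : 0 < Gm) (hg : g ≤ Gm) : √(g / Gm) ∈ Set.Icc (-1) 1 :=
  ⟨by linarith [sqrt_nonneg (g / Gm)], sqrt_le_one.2 ((div_le_one hGm).2 hg)⟩

theorem le_mul_cos_sq_iff {Gm a φ : ℝ} (hGm : 0 < Gm) (ha : a ≤ Gm)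
    (hφ : φ ∈ Set.Icc 0 (π / 2)) : a ≤ Gm * cos φ ^ 2 ↔ φ ≤ gainAngle Gm a := by
  have hcos : 0 ≤ cos φ := cos_nonneg_of_neg_pi_div_two_le_of_le (by linarith [hφ.1, pi_pos]) hφ.2
  rw [gainAngle, le_arccos_iff_le_cos (sqrt_div_mem_Icc hGm ha) ⟨hφ.1, by linarith [hφ.2, pi_pos]⟩,
    sqrt_le_left hcos, div_le_iff₀' hGm]

theorem mul_cos_sq_le_iff {Gm b φ : ℝ} (hGm : 0 < Gm) (hb₀ : 0 ≤ b) (hb : b ≤ Gm)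
    (hφ : φ ∈ Set.Icc 0 (π / 2)) : Gm * cos φ ^ 2 ≤ b ↔ gainAngle Gm b ≤ φ := by
  have hcos : 0 ≤ cos φ := cos_nonneg_of_neg_pi_div_two_le_of_le (by linarith [hφ.1, pi_pos]) hφ.2
  rw [gainAngle, arccos_le_iff_cos_le (sqrt_div_mem_Icc hGm hb) ⟨hφ.1, by linarith [hφ.2, pi_pos]⟩,
    le_sqrt hcos (div_nonneg hb₀ hGm.le), le_div_iff₀' hGm]

theorem gain_of_abs_le {Gm τ θ : ℝ} (hτ : 0 ≤ τ) (hθ : |θ| ≤ π / τ) :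
    gain Gm τ θ = Gm * cos (τ * |θ| / 2) ^ 2 := by
  rw [gain, if_pos hθ, ← cos_abs (τ * θ / 2), abs_div, abs_mul, abs_of_nonneg hτ, abs_two]

theorem gain_mem_Icc_iff {Gm τ a b θ : ℝ} (hGm : 0 < Gm) (hτ : 0 < τ) (ha : 0 < a) (hab : a ≤ b)
    (hb : b ≤ Gm) :
    a ≤ gain Gm τ θ ∧ gain Gm τ θ ≤ b ↔
      |θ| ∈ Set.Icc (2 * gainAngle Gm b / τ) (2 * gainAngle Gm a / τ) := by
  rw [Set.mem_Icc, div_le_iff₀ hτ, le_div_iff₀ hτ]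
  by_cases hθ : |θ| ≤ π / τ
  · have hφ : τ * |θ| / 2 ∈ Set.Icc 0 (π / 2) :=
      ⟨by positivity, by linarith [(le_div_iff₀' hτ).1 hθ]⟩
    rw [gain_of_abs_le hτ.le hθ, le_mul_cos_sq_iff hGm (hab.trans hb) hφ,
      mul_cos_sq_le_iff hGm (ha.le.trans hab) hb hφ]
    constructor <;> rintro ⟨h₁, h₂⟩ <;> constructor <;> linarith
  · have hπ : 2 * gainAngle Gm a ≤ π := by linarith [gainAngle_le_pi_div_two Gm a]
    rw [gain, if_neg hθ]
    rw [le_div_iff₀' hτ] at hθ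
    constructor <;> rintro ⟨h₁, h₂⟩ <;> linarith

theorem volume_abs_mem_Icc {r R : ℝ} (hr : 0 ≤ r) (hrR : r ≤ R) :
    volume {x : ℝ | |x| ∈ Set.Icc r R} = ENNReal.ofReal (2 * (R - r)) := by
  have hset : {x : ℝ | |x| ∈ Set.Icc r R} = Set.Icc (-R) R \ Set.Ioo (-r) r := by
    ext x
    simp only [Set.mem_ofPred_eq, Set.mem_Icc, Set.mem_sdiff, Set.mem_Ioo, ← abs_le, ← abs_lt,
      not_lt]
    tauto
  rw [hset, measure_sdiff (Set.Ioo_subset_Icc_self.trans (Set.Icc_subset_Icc (by linarith) hrR))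
    measurableSet_Ioo.nullMeasurableSet measure_Ioo_lt_top.ne, Real.volume_Icc, Real.volume_Ioo,
    ← ENNReal.ofReal_sub _ (by linarith)]
  ring_nf

theorem hasDerivAt_gainAngle {Gm x : ℝ} (hGm : 0 < Gm) (hx : 0 < x) (hxG : x < Gm) :
    HasDerivAt (gainAngle Gm) (-(1 / (2 * √x * √(Gm - x)))) x := by
  have hxGm : 0 < x / Gm := div_pos hx hGm
  have hs : √(x / Gm) < 1 := (sqrt_lt' one_pos).2 (by rw [one_pow]; exact (div_lt_one hGm).2 hxG)
  have h := (hasDerivAt_arccos (by linarith [sqrt_nonneg (x / Gm)]) hs.ne).comp x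
    ((hasDerivAt_sqrt hxGm.ne').comp x ((hasDerivAt_id x).div_const Gm))
  refine h.congr_deriv ?_
  have e : 1 - √(x / Gm) ^ 2 = (Gm - x) / Gm := by rw [sq_sqrt hxGm.le]; field_simp
  rw [e, sqrt_div (by linarith), sqrt_div hx.le]
  have := sqrt_pos.2 hGm
  have := sqrt_pos.2 hx
  have := sqrt_pos.2 (sub_pos.2 hxG)
  field_simp
  rw [sq_sqrt hGm.le]

theorem integral_inv_sqrt_mul_sqrt_sub {Gm a b : ℝ} (hGm : 0 < Gm) (ha : 0 ≤ a) (hab : a ≤ b)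
    (hb : b ≤ Gm) :
    ∫ g in a..b, 1 / (√g * √(Gm - g)) = 2 * (gainAngle Gm a - gainAngle Gm b) := by
  have hF : ContinuousOn (fun g ↦ -2 * gainAngle Gm g) (Set.Icc a b) :=
    (continuous_const.mul (continuous_gainAngle Gm)).continuousOn
  have hF' : ∀ x ∈ Set.Ioo a b,
      HasDerivAt (fun g ↦ -2 * gainAngle Gm g) (1 / (√x * √(Gm - x))) x := by
    intro x hx
    refine ((hasDerivAt_gainAngle hGm (ha.trans_lt hx.1) (hx.2.trans_le hb)).const_mul
      (-2)).congr_deriv ?_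
    field_simp
  have hnonneg : ∀ x ∈ Set.Ioo a b, 0 ≤ 1 / (√x * √(Gm - x)) := fun x _ ↦ by positivity
  have hint : IntervalIntegrable (fun g ↦ 1 / (√g * √(Gm - g))) volume a b := by
    apply intervalIntegral.intervalIntegrable_deriv_of_nonneg (g := fun g ↦ -2 * gainAngle Gm g)
    · rwa [Set.uIcc_of_le hab]
    · rwa [min_eq_left hab, max_eq_right hab]
    · rwa [min_eq_left hab, max_eq_right hab]
  rw [intervalIntegral.integral_eq_sub_of_hasDeriv_right_of_le hab hF
    (fun x hx ↦ (hF' x hx).hasDerivWithinAt) hint]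
  ring

theorem prob_gain_interval_eq_integral_pdf_general (Gm τ ε₀ : ℝ) (hGm : 0 < Gm) (hτ : 1 ≤ τ)
    (hε₁ : Real.pi / τ ≤ ε₀) :
    ∀ a b : ℝ, 0 < a → a ≤ b → b ≤ Gm →
      (volume {θ ∈ Set.Icc (-ε₀) ε₀ | a ≤ gain Gm τ θ ∧ gain Gm τ θ ≤ b}).toReal / (2 * ε₀)
        = ∫ g in a..b, 1 / (τ * ε₀ * Real.sqrt g * Real.sqrt (Gm - g)) := by
  intro a b ha hab hb
  have hτ₀ : 0 < τ := one_pos.trans_le hτ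
  have hε₀ : 0 < ε₀ := (div_pos pi_pos hτ₀).trans_le hε₁
  have hangles : 2 * gainAngle Gm b / τ ≤ 2 * gainAngle Gm a / τ := by
    gcongr
    exact gainAngle_antitone Gm hGm.le hab
  have hset : {θ ∈ Set.Icc (-ε₀) ε₀ | a ≤ gain Gm τ θ ∧ gain Gm τ θ ≤ b} =
      {θ | |θ| ∈ Set.Icc (2 * gainAngle Gm b / τ) (2 * gainAngle Gm a / τ)} := by
    ext θ
    rw [Set.mem_ofPred_eq, Set.mem_ofPred_eq, gain_mem_Icc_iff hGm hτ₀ ha hab hb,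
      and_iff_right_of_imp]
    -- the angles with gain at least `a > 0` lie in the main lobe `|θ| ≤ π / τ ≤ ε₀`
    refine fun h ↦ abs_le.1 (h.2.trans ((div_le_div_iff_of_pos_right hτ₀).2 ?_ |>.trans hε₁))
    linarith [gainAngle_le_pi_div_two Gm a]
  have hintegrand : ∀ g, 1 / (τ * ε₀ * √g * √(Gm - g)) = (τ * ε₀)⁻¹ * (1 / (√g * √(Gm - g))) :=
    fun g ↦ by rw [mul_assoc (τ * ε₀), one_div, mul_inv, one_div]
  rw [hset, volume_abs_mem_Icc
      (div_nonneg (mul_nonneg zero_le_two (gainAngle_nonneg Gm b)) hτ₀.le) hangles,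
    ENNReal.toReal_ofReal (by linarith),
    intervalIntegral.integral_congr (fun g _ ↦ hintegrand g), intervalIntegral.integral_const_mul,
    integral_inv_sqrt_mul_sqrt_sub hGm ha.le hab hb]
  field_simp

theorem prob_gain_interval_eq_integral_pdf (Gm τ ε₀ : ℝ) (hGm : 0 < Gm) (hτ : 1 ≤ τ)
    (hε₁ : Real.pi / τ ≤ ε₀) (hε₂ : ε₀ < Real.pi) :
    ∀ a b : ℝ, 0 < a → a ≤ b → b ≤ Gm →
      (volume {θ ∈ Set.Icc (-ε₀) ε₀ | a ≤ gain Gm τ θ ∧ gain Gm τ θ ≤ b}).toReal / (2 * ε₀)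
        = ∫ g in a..b, 1 / (τ * ε₀ * Real.sqrt g * Real.sqrt (Gm - g)) :=
  prob_gain_interval_eq_integral_pdf_general Gm τ ε₀ hGm hτ hε₁
end

section
/- Let s > 0, let 0 < ε₀ < π, and let ε have the truncated Gaussian distribution on [-ε₀, ε₀], i.e. the law of ε has density x ↦ exp(−x²/(2s²)) / (√(2πs²)·erf(ε₀/(√2·s))) on [-ε₀, ε₀] with respect to Lebesgue measure, where erf(x) = (2/√π)·∫₀ˣ exp(−t²) dt. Set ζ = 2/(τ²·s²). Then for every g with 0 < g ≤ Gm satisfying (2/τ)·arccos(√(g/Gm)) ≤ ε₀, the probability that G(ε) ≤ g equals 1 − erf(√ζ·arccos(√(g/Gm))) / erf(ε₀/(√2·s)). -/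
open Real MeasureTheory

/-- The error function `erf x = (2/√π) ∫₀ˣ exp (-t²) dt`. -/
noncomputable def erf (x : ℝ) : ℝ :=
  2 / Real.sqrt Real.pi * ∫ t in (0:ℝ)..x, Real.exp (-t ^ 2)

/-
The gain is an even, decreasing function of `|θ|` on `[0, π/τ]` and vanishes beyond, so
`G(θ) ≤ g` holds exactly when `|θ| ≥ a := (2/τ) arccos √(g/Gm)`. Since `a ≤ ε₀`, the event is
`[-ε₀, ε₀] \ (-a, a)`, and its probability is the difference of two Gaussian masses of symmetric
intervals; the substitution `t = θ / (√2 s)` and evenness turn `∫_{-b}^{b} exp(-θ²/(2s²))` into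
`√(2π s²) · erf (b / (√2 s))`, and `a / (√2 s) = √ζ · arccos √(g/Gm)`.
-/

open Set

lemma cos_le_iff_arccos_le {x y : ℝ} (hx : x ∈ Icc 0 π) (hy₁ : -1 ≤ y) (hy₂ : y ≤ 1) :
    cos x ≤ y ↔ arccos y ≤ x := by
  conv_lhs => rw [← cos_arccos hy₁ hy₂]
  exact strictAntiOn_cos.le_iff_ge hx ⟨arccos_nonneg y, arccos_le_pi y⟩

lemma gain_le_iff {Gm τ g : ℝ} (hGm : 0 < Gm) (hτ : 0 < τ) (hg : 0 ≤ g) (hgGm : g ≤ Gm)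
    (θ : ℝ) : gain Gm τ θ ≤ g ↔ 2 / τ * arccos (√(g / Gm)) ≤ |θ| := by
  set A := arccos (√(g / Gm))
  have hA : A ≤ π / 2 := arccos_le_pi_div_two.2 (sqrt_nonneg _)
  have hscale : 2 / τ * A ≤ |θ| ↔ A ≤ τ * |θ| / 2 := by
    rw [div_mul_eq_mul_div, div_le_iff₀ hτ, le_div_iff₀ two_pos]
    constructor <;> intro h <;> linarith
  unfold gain
  split_ifs with hθ
  · have hx₀ : 0 ≤ τ * |θ| / 2 := by positivity
    have hx₁ : τ * |θ| / 2 ≤ π / 2 := by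
      rw [le_div_iff₀ hτ] at hθ
      linarith
    have hcos : 0 ≤ cos (τ * |θ| / 2) :=
      cos_nonneg_of_mem_Icc ⟨by linarith [pi_pos], hx₁⟩
    have hτθ : |τ * θ / 2| = τ * |θ| / 2 := by
      rw [abs_div, abs_mul, abs_of_pos hτ, abs_two]
    rw [← cos_abs, hτθ, hscale, ← le_div_iff₀' hGm,
      ← le_sqrt hcos (div_nonneg hg hGm.le),
      cos_le_iff_arccos_le ⟨hx₀, by linarith [pi_pos]⟩ (by linarith [sqrt_nonneg (g / Gm)])
        (sqrt_le_one.2 ((div_le_one hGm).2 hgGm))]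
  · refine iff_of_true hg ?_
    calc 2 / τ * A ≤ 2 / τ * (π / 2) := by gcongr
      _ = π / τ := by field_simp
      _ ≤ |θ| := (not_le.1 hθ).le

lemma erf_pos {x : ℝ} (hx : 0 < x) : 0 < erf x :=
  mul_pos (by positivity) <| intervalIntegral.intervalIntegral_pos_of_pos_on
    ((by fun_prop : Continuous fun t : ℝ => exp (-t ^ 2)).intervalIntegrable 0 x)
    (fun t _ => exp_pos _) hx

lemma integral_symm_eq_two_mul_of_even {f : ℝ → ℝ} (hf : Continuous f)
    (heven : ∀ x, f (-x) = f x) (c : ℝ) :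
    ∫ x in (-c)..c, f x = 2 * ∫ x in (0:ℝ)..c, f x := by
  have hneg := intervalIntegral.integral_comp_neg (a := 0) (b := c) f
  simp only [heven, neg_zero] at hneg
  rw [← intervalIntegral.integral_add_adjacent_intervals (hf.intervalIntegrable (-c) 0)
    (hf.intervalIntegrable 0 c), ← hneg, two_mul]

lemma integral_exp_neg_sq_symm (c : ℝ) : ∫ t in (-c)..c, exp (-t ^ 2) = √π * erf c := by
  rw [integral_symm_eq_two_mul_of_even (by fun_prop) (fun t => by rw [neg_sq]), erf]
  have : √π ≠ 0 := by positivity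
  field_simp

lemma integral_exp_neg_sq_div_symm {s : ℝ} (hs : 0 < s) (b : ℝ) :
    ∫ θ in (-b)..b, exp (-θ ^ 2 / (2 * s ^ 2)) = √(2 * π * s ^ 2) * erf (b / (√2 * s)) := by
  have h2 : √2 ^ 2 = 2 := sq_sqrt zero_le_two
  have hrescale : ∀ θ : ℝ, exp (-θ ^ 2 / (2 * s ^ 2)) = exp (-(θ / (√2 * s)) ^ 2) := by
    intro θ
    rw [div_pow, mul_pow, h2, neg_div]
  have hnorm : √(2 * π * s ^ 2) = √2 * s * √π := by
    rw [sqrt_mul (by positivity), sqrt_mul zero_le_two, sqrt_sq hs.le]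
    ring
  simp_rw [hrescale]
  rw [intervalIntegral.integral_comp_div (fun t => exp (-t ^ 2)) (by positivity), neg_div,
    integral_exp_neg_sq_symm, smul_eq_mul, hnorm]
  ring

lemma setIntegral_Ioc_exp_neg_sq_div {s b : ℝ} (hs : 0 < s) (hb : 0 ≤ b) :
    ∫ θ in Ioc (-b) b, exp (-θ ^ 2 / (2 * s ^ 2)) = √(2 * π * s ^ 2) * erf (b / (√2 * s)) := by
  rw [← intervalIntegral.integral_of_le (by linarith), integral_exp_neg_sq_div_symm hs]

lemma sqrt_div_sq_mul_sq (x : ℝ) {a b : ℝ} (ha : 0 ≤ a) (hb : 0 ≤ b) :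
    √(x / (a ^ 2 * b ^ 2)) = √x / (a * b) := by
  rw [← mul_pow, sqrt_div' _ (by positivity), sqrt_sq (mul_nonneg ha hb)]

theorem cdf_truncated_gaussian_error_general (Gm τ s ε₀ : ℝ) (hGm : 0 < Gm) (hτ : 1 ≤ τ)
    (hs : 0 < s) (hε₁ : 0 < ε₀) :
    ∀ g : ℝ, 0 < g → g ≤ Gm →
      2 / τ * Real.arccos (Real.sqrt (g / Gm)) ≤ ε₀ →
      (∫ θ in {θ ∈ Set.Icc (-ε₀) ε₀ | gain Gm τ θ ≤ g},
          Real.exp (-θ ^ 2 / (2 * s ^ 2)) /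
            (Real.sqrt (2 * Real.pi * s ^ 2) * erf (ε₀ / (Real.sqrt 2 * s))))
        = 1 - erf (Real.sqrt (2 / (τ ^ 2 * s ^ 2)) * Real.arccos (Real.sqrt (g / Gm))) /
            erf (ε₀ / (Real.sqrt 2 * s)) := by
  intro g hg hgGm ha
  have hτ0 : 0 < τ := one_pos.trans_le hτ
  set a := 2 / τ * arccos (√(g / Gm)) with ha_def
  have ha0 : 0 ≤ a := mul_nonneg (by positivity) (arccos_nonneg _)
  have hevent : {θ ∈ Icc (-ε₀) ε₀ | gain Gm τ θ ≤ g} = Icc (-ε₀) ε₀ \ Ioo (-a) a := by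
    ext θ
    simp only [mem_ofPred_eq, mem_sdiff, mem_Ioo, gain_le_iff hGm hτ0 hg.le hgGm, ← ha_def,
      le_abs', not_and_or, not_lt]
  have harg : a / (√2 * s) = √(2 / (τ ^ 2 * s ^ 2)) * arccos (√(g / Gm)) := by
    rw [sqrt_div_sq_mul_sq 2 hτ0.le hs.le, ha_def]
    field_simp
    rw [sq_sqrt zero_le_two]
    ring
  have herf : 0 < erf (ε₀ / (√2 * s)) := erf_pos (by positivity)
  have hsub : Ioo (-a) a ⊆ Icc (-ε₀) ε₀ :=
    Ioo_subset_Icc_self.trans (Icc_subset_Icc (by linarith) ha)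
  rw [hevent, setIntegral_sdiff measurableSet_Ioo
      (Continuous.integrableOn_Icc (by fun_prop)) hsub,
    integral_div, integral_div, integral_Icc_eq_integral_Ioc,
    ← integral_Ioc_eq_integral_Ioo, setIntegral_Ioc_exp_neg_sq_div hs hε₁.le,
    setIntegral_Ioc_exp_neg_sq_div hs ha0, harg]
  have : √(2 * π * s ^ 2) ≠ 0 := by positivity
  rw [mul_div_mul_left _ _ this, mul_div_mul_left _ _ this, div_self herf.ne']

theorem cdf_truncated_gaussian_error (Gm τ s ε₀ : ℝ) (hGm : 0 < Gm) (hτ : 1 ≤ τ)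
    (hs : 0 < s) (hε₁ : 0 < ε₀) (hε₂ : ε₀ < Real.pi) :
    ∀ g : ℝ, 0 < g → g ≤ Gm →
      2 / τ * Real.arccos (Real.sqrt (g / Gm)) ≤ ε₀ →
      (∫ θ in {θ ∈ Set.Icc (-ε₀) ε₀ | gain Gm τ θ ≤ g},
          Real.exp (-θ ^ 2 / (2 * s ^ 2)) /
            (Real.sqrt (2 * Real.pi * s ^ 2) * erf (ε₀ / (Real.sqrt 2 * s))))
        = 1 - erf (Real.sqrt (2 / (τ ^ 2 * s ^ 2)) * Real.arccos (Real.sqrt (g / Gm))) /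
            erf (ε₀ / (Real.sqrt 2 * s)) :=
  cdf_truncated_gaussian_error_general Gm τ s ε₀ hGm hτ hs hε₁
end
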